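/- arXiv:1608.02352 — 3 statements merged into one kernel-verified Lean document; each statement's English description precedes it below -/
import Mathlib

section
/- Let ω : [0, δ] → [0,∞) be a modulus of continuity satisfying the Q-decreasing quotient property. Then for every Θ ≥ 1 and every t ∈ (0, δ/Θ], one has ∫₀^{Θt} (ω(s)/s) ds ≤ 2Q²·Θ·∫₀ᵗ (ω(s)/s) ds. -/
/-!
Write `g s = ω s / s`, so that `g r ≤ Q g h` for `0 < h ≤ r ≤ δ`. Comparing `g` with `g t` on
`(0, t]` gives `t g(t) ≤ Q ∫₀ᵗ g`, and on `[t, Θt]` gives `∫ₜ^{Θt} g ≤ Q (Θ - 1) t g(t)`.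
Hence `∫₀^{Θt} g ≤ (1 + Q² (Θ - 1)) ∫₀ᵗ g ≤ Q² Θ ∫₀ᵗ g`.
-/

open MeasureTheory Set

section IntervalIntegralBounds

variable {f : ℝ → ℝ} {a b c : ℝ}

theorem mul_le_intervalIntegral_of_le_on_Ioc (hab : a ≤ b) (hf : IntervalIntegrable f volume a b)
    (h : ∀ x ∈ Ioc a b, c ≤ f x) : c * (b - a) ≤ ∫ x in a..b, f x := by
  rw [intervalIntegral.integral_of_le hab]
  simpa [Real.volume_real_Ioc_of_le hab] using
    setIntegral_ge_of_const_le_real measurableSet_Ioc measure_Ioc_lt_top.ne h hf.1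

theorem intervalIntegral_le_mul_of_le_on_Ioc (hab : a ≤ b) (hf : IntervalIntegrable f volume a b)
    (h : ∀ x ∈ Ioc a b, f x ≤ c) : ∫ x in a..b, f x ≤ c * (b - a) := by
  have := mul_le_intervalIntegral_of_le_on_Ioc hab hf.neg fun x hx => neg_le_neg (h x hx)
  simp only [Pi.neg_apply, intervalIntegral.integral_neg] at this
  linarith

end IntervalIntegralBounds

/-- The `Q`-decreasing quotient property of `ω` reads
`QuasiAntitoneOn Q (fun s => ω s / s) (Ioc 0 δ)`. -/
def QuasiAntitoneOn (Q : ℝ) (g : ℝ → ℝ) (s : Set ℝ) : Prop :=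
  ∀ ⦃x⦄, x ∈ s → ∀ ⦃y⦄, y ∈ s → x ≤ y → g y ≤ Q * g x

namespace QuasiAntitoneOn

variable {Q t T : ℝ} {g : ℝ → ℝ}

theorem le_mul_of_mem_Ioc (hg : QuasiAntitoneOn Q g (Ioc 0 T)) (ht : 0 < t) (htT : t ≤ T)
    {s : ℝ} (hs : s ∈ Ioc 0 t) : g t ≤ Q * g s :=
  hg ⟨hs.1, hs.2.trans htT⟩ ⟨ht, htT⟩ hs.2

theorem intervalIntegral_nonneg (hg : QuasiAntitoneOn Q g (Ioc 0 T)) (hQ : 0 < Q) (ht : 0 < t)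
    (htT : t ≤ T) (hgt : 0 ≤ g t) : 0 ≤ ∫ s in (0 : ℝ)..t, g s := by
  rw [intervalIntegral.integral_of_le ht.le]
  refine setIntegral_nonneg measurableSet_Ioc fun s hs => ?_
  exact nonneg_of_mul_nonneg_right (hgt.trans (hg.le_mul_of_mem_Ioc ht htT hs)) hQ

theorem mul_le_mul_intervalIntegral (hg : QuasiAntitoneOn Q g (Ioc 0 T)) (hQ : 0 < Q)
    (ht : 0 < t) (htT : t ≤ T) (hint : IntervalIntegrable g volume 0 t) :
    t * g t ≤ Q * ∫ s in (0 : ℝ)..t, g s := by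
  have := mul_le_intervalIntegral_of_le_on_Ioc ht.le hint fun s hs =>
    (div_le_iff₀' hQ).2 (hg.le_mul_of_mem_Ioc ht htT hs)
  rw [sub_zero, div_mul_eq_mul_div, div_le_iff₀' hQ] at this
  linarith

theorem intervalIntegral_le_mul (hg : QuasiAntitoneOn Q g (Ioc 0 T)) (ht : 0 < t) (htT : t ≤ T)
    (hint : IntervalIntegrable g volume t T) :
    ∫ s in t..T, g s ≤ Q * g t * (T - t) :=
  intervalIntegral_le_mul_of_le_on_Ioc htT hint fun _ hs =>
    hg ⟨ht, htT⟩ ⟨ht.trans hs.1, hs.2⟩ hs.1.le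

theorem mul_intervalIntegral_le (hg : QuasiAntitoneOn Q g (Ioc 0 T)) (hQ : 1 ≤ Q) (ht : 0 < t)
    (htT : t ≤ T) (hgt : 0 ≤ g t) :
    t * ∫ s in (0 : ℝ)..T, g s ≤ Q ^ 2 * T * ∫ s in (0 : ℝ)..t, g s := by
  have hQ0 : 0 < Q := by linarith
  have hI := hg.intervalIntegral_nonneg hQ0 ht htT hgt
  by_cases hint : IntervalIntegrable g volume 0 T
  · have hint₁ : IntervalIntegrable g volume 0 t :=
      hint.mono_set (uIcc_subset_uIcc_left (mem_uIcc_of_le ht.le htT))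
    have hint₂ : IntervalIntegrable g volume t T :=
      hint.mono_set (uIcc_subset_uIcc_right (mem_uIcc_of_le ht.le htT))
    have hhead := hg.mul_le_mul_intervalIntegral hQ0 ht htT hint₁
    have htail := hg.intervalIntegral_le_mul ht htT hint₂
    rw [← intervalIntegral.integral_add_adjacent_intervals hint₁ hint₂]
    set I := ∫ s in (0 : ℝ)..t, g s
    have hQ2 : 1 ≤ Q ^ 2 := one_le_pow₀ hQ
    calc t * (I + ∫ s in t..T, g s) ≤ t * I + Q * (t * g t) * (T - t) := by
          linarith [mul_le_mul_of_nonneg_left htail ht.le]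
      _ ≤ t * I + Q * (Q * I) * (T - t) := by gcongr
      _ ≤ Q ^ 2 * T * I := by nlinarith [mul_le_mul_of_nonneg_right hQ2 (mul_nonneg ht.le hI)]
  · rw [intervalIntegral.integral_undef hint, mul_zero]
    exact mul_nonneg (mul_nonneg (sq_nonneg Q) (ht.le.trans htT)) hI

end QuasiAntitoneOn

theorem stmt1_general (δ Q : ℝ) (hQ : 1 ≤ Q)
    (ω : ℝ → ℝ)
    (hωpos : ∀ t : ℝ, 0 < t → t ≤ δ → 0 < ω t)
    (hquot : ∀ h r : ℝ, 0 < h → h ≤ r → r ≤ δ → ω r / r ≤ Q * (ω h / h)) :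
    ∀ Θ : ℝ, 1 ≤ Θ → ∀ t : ℝ, 0 < t → t ≤ δ / Θ →
      (∫ s in (0:ℝ)..(Θ * t), ω s / s) ≤ 2 * Q ^ 2 * Θ * ∫ s in (0:ℝ)..t, ω s / s := by
  intro Θ hΘ t ht htδ
  have hΘt : t ≤ Θ * t := le_mul_of_one_le_left ht.le hΘ
  have hΘtδ : Θ * t ≤ δ := by rwa [le_div_iff₀ (by linarith), mul_comm] at htδ
  have hg : QuasiAntitoneOn Q (fun s => ω s / s) (Ioc 0 (Θ * t)) :=
    fun h hh r hr hhr => hquot h r hh.1 hhr (hr.2.trans hΘtδ)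
  have hgt : 0 ≤ ω t / t := div_nonneg (hωpos t ht (hΘt.trans hΘtδ)).le ht.le
  have hI := hg.intervalIntegral_nonneg (by linarith) ht hΘt hgt
  have hscaled := hg.mul_intervalIntegral_le hQ ht hΘt hgt
  calc (∫ s in (0:ℝ)..(Θ * t), ω s / s) ≤ Q ^ 2 * Θ * ∫ s in (0:ℝ)..t, ω s / s := by
        refine le_of_mul_le_mul_left ?_ ht
        linarith
    _ ≤ 2 * Q ^ 2 * Θ * ∫ s in (0:ℝ)..t, ω s / s := by
        linarith [mul_nonneg (by positivity : 0 ≤ Q ^ 2 * Θ) hI]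

theorem stmt1 (δ Q : ℝ) (hδ0 : 0 < δ) (hδ1 : δ ≤ 1) (hQ : 1 ≤ Q)
    (ω : ℝ → ℝ)
    (hmono : MonotoneOn ω (Set.Icc 0 δ))
    (hcont : ContinuousOn ω (Set.Icc 0 δ))
    (hω0 : ω 0 = 0)
    (hωpos : ∀ t : ℝ, 0 < t → t ≤ δ → 0 < ω t)
    (hquot : ∀ h r : ℝ, 0 < h → h ≤ r → r ≤ δ → ω r / r ≤ Q * (ω h / h)) :
    ∀ Θ : ℝ, 1 ≤ Θ → ∀ t : ℝ, 0 < t → t ≤ δ / Θ →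
      (∫ s in (0:ℝ)..(Θ * t), ω s / s) ≤ 2 * Q ^ 2 * Θ * ∫ s in (0:ℝ)..t, ω s / s :=
  stmt1_general δ Q hQ ω hωpos hquot
end

section
/- (C^{1,ω} interior regularity by uniform control on Taylor expansions.) Let u be defined in B_r ⊂ ℝⁿ and ω : [0,δ_ω] → [0,∞) a modulus of continuity, and r₀ ≤ min{r/2, δ_ω}. Assume that for every x₀ ∈ closure(B_{r/2}) there exists an affine function P_{x₀} such that |u(x) − P_{x₀}(x)| ≤ T·|x−x₀|·ω(|x−x₀|) for all x ∈ B_r with |x−x₀| ≤ r₀. Then u is differentiable at every point of closure(B_{r/2}), ∇u(x₀) is the linear part of P_{x₀}, and there is a dimensional constant E > 0 with [∇u]_{C^{0,ω}(closure B_{r/2})} ≤ E·(T + ‖∇u‖_{L^∞(closure B_{r/2})}/ω(r₀/4)) and [∇u]_{C^{0,ω}(closure B_{r₀/8})} ≤ E·T. -/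
/-!
Let `ρ = ‖x₀ - x₁‖ ≤ r₀ / 4`. On the ball of radius `ρ / 2` about the midpoint of `x₀` and `x₁`
both affine approximations are within `T ρ ω(ρ)` of `u`, so their difference, an affine function
with slope `A x₀ - A x₁`, is bounded by `2 T ρ ω(ρ)` there; testing it at the centre and in the
direction of its slope gives `ρ ‖A x₀ - A x₁‖ ≤ 8 T ρ ω(ρ)`. Points farther apart than `r₀ / 4`
are handled by `‖A x - A y‖ ≤ 2 M ≤ 2 M ω(‖x - y‖) / ω(r₀ / 4)`. Differentiability holds because
the hypothesis at `x = x₀` forces `b x₀ = u x₀` and `ω(t) → 0` as `t → 0⁺`; so `E = 8` works.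
-/

open Filter Metric Set Topology
open scoped RealInnerProductSpace

theorem MonotoneOn.const_mul_id_mul {ω : ℝ → ℝ} {δ : ℝ} (hmono : MonotoneOn ω (Icc 0 δ))
    (hω0 : ω 0 = 0) {T : ℝ} (hT : 0 ≤ T) :
    MonotoneOn (fun t => T * t * ω t) (Icc 0 δ) := by
  intro s hs t ht hst
  have hωs : 0 ≤ ω s := hω0 ▸ hmono ⟨le_rfl, hs.1.trans hs.2⟩ hs hs.1
  exact mul_le_mul (mul_le_mul_of_nonneg_left hst hT) (hmono hs ht hst) hωs (mul_nonneg hT ht.1)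

section TaylorControl

variable {E : Type*} [NormedAddCommGroup E] [InnerProductSpace ℝ E]

theorem mul_norm_le_of_abs_inner_add_le {a : E} {c K s : ℝ} (hs : 0 ≤ s)
    (h : ∀ y : E, ‖y‖ ≤ s → |⟪a, y⟫ + c| ≤ K) : s * ‖a‖ ≤ 2 * K := by
  have hc : |c| ≤ K := by simpa using h 0 (by simpa using hs)
  rcases eq_or_ne a 0 with rfl | ha
  · simpa using (abs_nonneg c).trans hc
  have ha' : 0 < ‖a‖ := norm_pos_iff.mpr ha
  set y : E := (s / ‖a‖) • a
  have hy : ‖y‖ = s := by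
    rw [norm_smul, Real.norm_eq_abs, abs_of_nonneg (by positivity), div_mul_cancel₀ _ ha'.ne']
  have hay : ⟪a, y⟫ = s * ‖a‖ := by
    rw [real_inner_smul_right, real_inner_self_eq_norm_sq]
    field_simp
  have hKy := h y hy.le
  rw [hay] at hKy
  linarith [abs_le.mp hKy, abs_le.mp hc]

-- The lens `{‖x - x₀‖ ≤ ‖x₀ - x₁‖, ‖x - x₁‖ ≤ ‖x₀ - x₁‖}` contains the ball of radius
-- `‖x₀ - x₁‖ / 2` about the midpoint, on which the two affine functions differ by at most `2 K`.
theorem mul_norm_sub_le_of_abs_sub_affine_le {u : E → ℝ} {a₀ a₁ x₀ x₁ : E} {b₀ b₁ K : ℝ}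
    (h : ∀ x, ‖x - x₀‖ ≤ ‖x₀ - x₁‖ → ‖x - x₁‖ ≤ ‖x₀ - x₁‖ →
      |u x - (⟪a₀, x - x₀⟫ + b₀)| ≤ K ∧ |u x - (⟪a₁, x - x₁⟫ + b₁)| ≤ K) :
    ‖x₀ - x₁‖ * ‖a₀ - a₁‖ ≤ 8 * K := by
  set m := midpoint ℝ x₀ x₁
  have hm₀ : ‖m - x₀‖ = ‖x₀ - x₁‖ / 2 := by
    rw [← dist_eq_norm, dist_midpoint_left, dist_eq_norm]; norm_num; ring
  have hm₁ : ‖m - x₁‖ = ‖x₀ - x₁‖ / 2 := by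
    rw [← dist_eq_norm, dist_midpoint_right, dist_eq_norm]; norm_num; ring
  have hball : (‖x₀ - x₁‖ / 2) * ‖a₀ - a₁‖ ≤ 2 * (2 * K) := by
    refine mul_norm_le_of_abs_inner_add_le (c := ⟪a₀, m - x₀⟫ + b₀ - (⟪a₁, m - x₁⟫ + b₁))
      (by positivity) fun y hy => ?_
    have hdist : ∀ z, ‖m - z‖ = ‖x₀ - x₁‖ / 2 → ‖m + y - z‖ ≤ ‖x₀ - x₁‖ := fun z hz =>
      calc ‖m + y - z‖ = ‖y + (m - z)‖ := by congr 1; abel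
        _ ≤ ‖y‖ + ‖m - z‖ := norm_add_le _ _
        _ ≤ ‖x₀ - x₁‖ := by linarith
    obtain ⟨h₀, h₁⟩ := h (m + y) (hdist x₀ hm₀) (hdist x₁ hm₁)
    have hsplit : ∀ (a z : E), ⟪a, m + y - z⟫ = ⟪a, y⟫ + ⟪a, m - z⟫ := fun a z => by
      rw [← inner_add_right]; congr 1; abel
    rw [hsplit] at h₀ h₁
    rw [inner_sub_left, abs_le]
    constructor <;> linarith [abs_le.mp h₀, abs_le.mp h₁]
  linarith

variable {u : E → ℝ} {A : E → E} {b : E → ℝ} {S R : Set E} {r₀ δ T : ℝ} {ω : ℝ → ℝ}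

theorem norm_sub_le_of_taylor_bound (hT : 0 ≤ T) (hmono : MonotoneOn ω (Icc 0 δ)) (hω0 : ω 0 = 0)
    (h : ∀ x₀ ∈ S, ∀ x ∈ R, ‖x - x₀‖ ≤ r₀ →
      |u x - (⟪A x₀, x - x₀⟫ + b x₀)| ≤ T * ‖x - x₀‖ * ω ‖x - x₀‖)
    {x₀ x₁ : E} (hx₀ : x₀ ∈ S) (hx₁ : x₁ ∈ S) (hpos : 0 < ‖x₀ - x₁‖)
    (hr₀ : ‖x₀ - x₁‖ ≤ r₀) (hδ : ‖x₀ - x₁‖ ≤ δ) (hR : closedBall x₀ ‖x₀ - x₁‖ ⊆ R) :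
    ‖A x₀ - A x₁‖ ≤ 8 * T * ω ‖x₀ - x₁‖ := by
  set ρ := ‖x₀ - x₁‖
  have hmono' := hmono.const_mul_id_mul hω0 hT
  have hρ : ρ ∈ Icc 0 δ := ⟨hpos.le, hδ⟩
  have hbound : ∀ z ∈ S, ∀ x ∈ R, ‖x - z‖ ≤ ρ →
      |u x - (⟪A z, x - z⟫ + b z)| ≤ T * ρ * ω ρ := fun z hz x hx hxz =>
    (h z hz x hx (hxz.trans hr₀)).trans
      (hmono' ⟨norm_nonneg _, hxz.trans hδ⟩ hρ hxz)
  have hslope := mul_norm_sub_le_of_abs_sub_affine_le (u := u) (a₀ := A x₀) (a₁ := A x₁)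
    (b₀ := b x₀) (b₁ := b x₁) fun x h₀ h₁ =>
      have hx : x ∈ R := hR (mem_closedBall_iff_norm.mpr h₀)
      ⟨hbound x₀ hx₀ x hx h₀, hbound x₁ hx₁ x hx h₁⟩
  exact le_of_mul_le_mul_left (by linarith) hpos

theorem hasFDerivAt_of_abs_sub_inner_le {x₀ a : E} {c : ℝ}
    (hω : Tendsto ω (𝓝[≥] 0) (𝓝 0))
    (h : ∀ᶠ x in 𝓝 x₀, |u x - (⟪a, x - x₀⟫ + c)| ≤ T * ‖x - x₀‖ * ω ‖x - x₀‖) :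
    HasFDerivAt u (innerSL ℝ a) x₀ := by
  have hc : c = u x₀ := by
    have := h.self_of_nhds
    simp only [sub_self, inner_zero_right, norm_zero, mul_zero, zero_mul, zero_add] at this
    linarith [abs_nonpos_iff.mp this]
  subst hc
  have hlim : Tendsto (fun x => T * ω ‖x - x₀‖) (𝓝 x₀) (𝓝 0) := by
    simpa using (hω.comp (tendsto_norm_sub_self_nhdsGE x₀)).const_mul T
  rw [hasFDerivAt_iff_isLittleO, Asymptotics.isLittleO_iff]
  intro ε hε
  filter_upwards [h, hlim.eventually_lt_const hε] with x hx hsmall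
  rw [innerSL_apply_apply, Real.norm_eq_abs, sub_sub, add_comm (u x₀)]
  calc _ ≤ T * ‖x - x₀‖ * ω ‖x - x₀‖ := hx
    _ = T * ω ‖x - x₀‖ * ‖x - x₀‖ := by ring
    _ ≤ ε * ‖x - x₀‖ := by gcongr

end TaylorControl

theorem norm_sub_le_of_local_modulus {X F : Type*} [SeminormedAddCommGroup X]
    [SeminormedAddCommGroup F] {A : X → F} {S : Set X} {ω : ℝ → ℝ} {δ ρ₀ C M : ℝ}
    (hmono : MonotoneOn ω (Icc 0 δ)) (hω : ∀ t, 0 < t → t ≤ δ → 0 < ω t)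
    (hC : 0 ≤ C) (hρ₀ : 0 < ρ₀) (hρ₀δ : ρ₀ ≤ δ) (hM : ∀ z ∈ S, ‖A z‖ ≤ M)
    (hloc : ∀ x ∈ S, ∀ y ∈ S, 0 < ‖x - y‖ → ‖x - y‖ ≤ ρ₀ → ‖A x - A y‖ ≤ C * ω ‖x - y‖)
    {x y : X} (hx : x ∈ S) (hy : y ∈ S) (hpos : 0 < ‖x - y‖) (hδ : ‖x - y‖ ≤ δ) :
    ‖A x - A y‖ ≤ (C + 2 * M / ω ρ₀) * ω ‖x - y‖ := by
  have hωxy := hω _ hpos hδ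
  have hωρ₀ := hω ρ₀ hρ₀ hρ₀δ
  have hM0 : 0 ≤ M := (norm_nonneg _).trans (hM x hx)
  rcases le_or_gt ‖x - y‖ ρ₀ with hle | hlt
  · calc ‖A x - A y‖ ≤ C * ω ‖x - y‖ := hloc x hx y hy hpos hle
      _ ≤ (C + 2 * M / ω ρ₀) * ω ‖x - y‖ := by
        gcongr; exact le_add_of_nonneg_right (by positivity)
  · have hωle : ω ρ₀ ≤ ω ‖x - y‖ := hmono ⟨hρ₀.le, hlt.le.trans hδ⟩ ⟨hpos.le, hδ⟩ hlt.le
    calc ‖A x - A y‖ ≤ ‖A x‖ + ‖A y‖ := norm_sub_le _ _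
      _ ≤ 2 * M := by linarith [hM x hx, hM y hy]
      _ = 2 * M / ω ρ₀ * ω ρ₀ := by field_simp
      _ ≤ 2 * M / ω ρ₀ * ω ‖x - y‖ := by gcongr
      _ ≤ (C + 2 * M / ω ρ₀) * ω ‖x - y‖ := by gcongr; exact le_add_of_nonneg_left hC

theorem stmt10_general (n : ℕ) :
    ∃ E : ℝ, 0 < E ∧
      ∀ (r r₀ δω T : ℝ) (ω : ℝ → ℝ) (u : EuclideanSpace ℝ (Fin n) → ℝ)
        (A : EuclideanSpace ℝ (Fin n) → EuclideanSpace ℝ (Fin n))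
        (b : EuclideanSpace ℝ (Fin n) → ℝ),
        0 < r → 0 ≤ T → 0 < δω → δω ≤ 1 → 0 < r₀ → r₀ ≤ min (r / 2) δω →
        MonotoneOn ω (Set.Icc 0 δω) → ContinuousOn ω (Set.Icc 0 δω) → ω 0 = 0 →
        (∀ t : ℝ, 0 < t → t ≤ δω → 0 < ω t) →
        (∀ x₀ ∈ closure (Metric.ball (0 : EuclideanSpace ℝ (Fin n)) (r / 2)),
          ∀ x ∈ Metric.ball (0 : EuclideanSpace ℝ (Fin n)) r, ‖x - x₀‖ ≤ r₀ →
            |u x - ((inner ℝ (A x₀) (x - x₀) : ℝ) + b x₀)| ≤ T * ‖x - x₀‖ * ω ‖x - x₀‖) →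
        ((∀ x₀ ∈ closure (Metric.ball (0 : EuclideanSpace ℝ (Fin n)) (r / 2)),
            HasFDerivAt u (innerSL ℝ (A x₀)) x₀) ∧
         (∀ M : ℝ,
            (∀ z ∈ closure (Metric.ball (0 : EuclideanSpace ℝ (Fin n)) (r / 2)), ‖A z‖ ≤ M) →
            ∀ x ∈ closure (Metric.ball (0 : EuclideanSpace ℝ (Fin n)) (r / 2)),
            ∀ y ∈ closure (Metric.ball (0 : EuclideanSpace ℝ (Fin n)) (r / 2)),
              0 < ‖x - y‖ → ‖x - y‖ ≤ δω →
                ‖A x - A y‖ ≤ E * (T + M / ω (r₀ / 4)) * ω ‖x - y‖) ∧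
         (∀ x ∈ closure (Metric.ball (0 : EuclideanSpace ℝ (Fin n)) (r₀ / 8)),
          ∀ y ∈ closure (Metric.ball (0 : EuclideanSpace ℝ (Fin n)) (r₀ / 8)),
              0 < ‖x - y‖ → ‖x - y‖ ≤ δω →
                ‖A x - A y‖ ≤ E * T * ω ‖x - y‖)) := by
  refine ⟨8, by norm_num, ?_⟩
  intro r r₀ δω T ω u A b hr hT hδ _ hr₀ hr₀le hmono hcont hω0 hωpos h
  obtain ⟨hr₀r, hr₀δ⟩ := le_min_iff.mp hr₀le
  rw [closure_ball 0 (by positivity : r / 2 ≠ 0)] at h ⊢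
  have key : ∀ x ∈ closedBall 0 (r / 2), ∀ y ∈ closedBall 0 (r / 2), 0 < ‖x - y‖ →
      ‖x - y‖ ≤ r₀ / 4 → ‖A x - A y‖ ≤ 8 * T * ω ‖x - y‖ := fun x hx y hy hpos hle =>
    norm_sub_le_of_taylor_bound hT hmono hω0 h hx hy hpos (by linarith) (by linarith)
      (closedBall_subset_ball' (by rw [dist_zero_right]; linarith [mem_closedBall_zero_iff.mp hx]))
  refine ⟨fun x₀ hx₀ => ?_, fun M hM x hx y hy hpos hxy => ?_, fun x hx y hy hpos hxy => ?_⟩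
  · have hωlim : Tendsto ω (𝓝[≥] 0) (𝓝 0) := by
      simpa only [ContinuousWithinAt, hω0] using
        (hcont 0 ⟨le_rfl, hδ.le⟩).mono_of_mem_nhdsWithin (Icc_mem_nhdsGE hδ)
    have hnear : ∀ᶠ x in 𝓝 x₀,
        |u x - (⟪A x₀, x - x₀⟫ + b x₀)| ≤ T * ‖x - x₀‖ * ω ‖x - x₀‖ := by
      filter_upwards [ball_mem_nhds x₀ hr₀] with x hx
      refine h x₀ hx₀ x (ball_subset_ball' ?_ hx) (mem_ball_iff_norm.mp hx).le
      rw [dist_zero_right]; linarith [mem_closedBall_zero_iff.mp hx₀]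
    exact hasFDerivAt_of_abs_sub_inner_le hωlim hnear
  · have hM0 : 0 ≤ M / ω (r₀ / 4) :=
      div_nonneg ((norm_nonneg _).trans (hM x hx)) (hωpos _ (by positivity) (by linarith)).le
    calc ‖A x - A y‖ ≤ (8 * T + 2 * M / ω (r₀ / 4)) * ω ‖x - y‖ :=
          norm_sub_le_of_local_modulus hmono hωpos (by positivity) (by positivity) (by linarith)
            hM key hx hy hpos hxy
      _ ≤ 8 * (T + M / ω (r₀ / 4)) * ω ‖x - y‖ := by
        gcongr
        · exact (hωpos _ hpos hxy).le
        · rw [mul_div_assoc]; linarith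
  · have hsub : closure (ball (0 : EuclideanSpace ℝ (Fin n)) (r₀ / 8)) ⊆ closedBall 0 (r / 2) :=
      closure_ball_subset_closedBall.trans (closedBall_subset_closedBall (by linarith))
    refine key x (hsub hx) y (hsub hy) hpos ?_
    have hx' := mem_closedBall_zero_iff.mp (closure_ball_subset_closedBall hx)
    have hy' := mem_closedBall_zero_iff.mp (closure_ball_subset_closedBall hy)
    linarith [norm_sub_le x y]

theorem stmt10 (n : ℕ) (hn : 1 ≤ n) :
    ∃ E : ℝ, 0 < E ∧
      ∀ (r r₀ δω T : ℝ) (ω : ℝ → ℝ) (u : EuclideanSpace ℝ (Fin n) → ℝ)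
        (A : EuclideanSpace ℝ (Fin n) → EuclideanSpace ℝ (Fin n))
        (b : EuclideanSpace ℝ (Fin n) → ℝ),
        0 < r → 0 ≤ T → 0 < δω → δω ≤ 1 → 0 < r₀ → r₀ ≤ min (r / 2) δω →
        MonotoneOn ω (Set.Icc 0 δω) → ContinuousOn ω (Set.Icc 0 δω) → ω 0 = 0 →
        (∀ t : ℝ, 0 < t → t ≤ δω → 0 < ω t) →
        (∀ x₀ ∈ closure (Metric.ball (0 : EuclideanSpace ℝ (Fin n)) (r / 2)),
          ∀ x ∈ Metric.ball (0 : EuclideanSpace ℝ (Fin n)) r, ‖x - x₀‖ ≤ r₀ →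
            |u x - ((inner ℝ (A x₀) (x - x₀) : ℝ) + b x₀)| ≤ T * ‖x - x₀‖ * ω ‖x - x₀‖) →
        ((∀ x₀ ∈ closure (Metric.ball (0 : EuclideanSpace ℝ (Fin n)) (r / 2)),
            HasFDerivAt u (innerSL ℝ (A x₀)) x₀) ∧
         (∀ M : ℝ,
            (∀ z ∈ closure (Metric.ball (0 : EuclideanSpace ℝ (Fin n)) (r / 2)), ‖A z‖ ≤ M) →
            ∀ x ∈ closure (Metric.ball (0 : EuclideanSpace ℝ (Fin n)) (r / 2)),
            ∀ y ∈ closure (Metric.ball (0 : EuclideanSpace ℝ (Fin n)) (r / 2)),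
              0 < ‖x - y‖ → ‖x - y‖ ≤ δω →
                ‖A x - A y‖ ≤ E * (T + M / ω (r₀ / 4)) * ω ‖x - y‖) ∧
         (∀ x ∈ closure (Metric.ball (0 : EuclideanSpace ℝ (Fin n)) (r₀ / 8)),
          ∀ y ∈ closure (Metric.ball (0 : EuclideanSpace ℝ (Fin n)) (r₀ / 8)),
              0 < ‖x - y‖ → ‖x - y‖ ≤ δω →
                ‖A x - A y‖ ≤ E * T * ω ‖x - y‖)) :=
  stmt10_general n
end

section
/- Sharpness example: let u(x,y) = y·|ln √(x²+y²)|^{1/4} on the half-disc B_{1/2}⁺ ⊂ ℝ² (with u = 0 on {y = 0}). Then u is continuous on the closure of B_{1/2}⁺, smooth in the open half-disc, u vanishes on the flat boundary, and u(0,y)/y = |ln y|^{1/4} → ∞ as y → 0⁺; in particular, no Lipschitz-in-the-normal-direction estimate |u(0,y)| ≤ C·y can hold near the origin. -/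
open Filter

/-- The sharpness example `u(x,y) = y·|ln √(x²+y²)|^{1/4}`. -/
noncomputable def u14 (p : ℝ × ℝ) : ℝ :=
  p.2 * |Real.log (Real.sqrt (p.1 ^ 2 + p.2 ^ 2))| ^ ((1:ℝ) / 4)

/-- The open upper half-disc of radius `1/2`. -/
def S14 : Set (ℝ × ℝ) := {p | p.1 ^ 2 + p.2 ^ 2 < 1 / 4 ∧ 0 < p.2}

open Real Set Topology in
lemma phi14_tendsto : Tendsto (fun x : ℝ => x * |Real.log x| ^ ((1:ℝ)/4)) (𝓝[>] 0) (𝓝 0) := by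
  have hlo := isLittleO_abs_log_rpow_rpow_nhdsGT_zero ((1:ℝ)/4) (show (-(1/2):ℝ) < 0 by norm_num)
  have hb := hlo.bound one_pos
  have hg : Tendsto (fun x : ℝ => x ^ ((1:ℝ)/2)) (𝓝[>] 0) (𝓝 0) := by
    have : ContinuousAt (fun x : ℝ => x ^ ((1:ℝ)/2)) 0 :=
      Real.continuousAt_rpow_const 0 _ (Or.inr (by norm_num))
    have h0 : (0:ℝ) ^ ((1:ℝ)/2) = 0 := Real.zero_rpow (by norm_num)
    simpa [ContinuousAt, h0] using this.tendsto.mono_left nhdsWithin_le_nhds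
  refine squeeze_zero' ?_ ?_ hg
  · filter_upwards [self_mem_nhdsWithin] with x hx
    exact mul_nonneg (le_of_lt hx) (Real.rpow_nonneg (abs_nonneg _) _)
  · filter_upwards [self_mem_nhdsWithin, hb] with x hx hbx
    have hx0 : (0:ℝ) < x := hx
    have h1 : |Real.log x| ^ ((1:ℝ)/4) ≤ x ^ (-(1/2):ℝ) := by
      have := hbx
      rwa [one_mul, Real.norm_eq_abs, Real.norm_eq_abs,
        abs_of_nonneg (Real.rpow_nonneg (abs_nonneg _) _),
        abs_of_nonneg (Real.rpow_nonneg hx0.le _)] at this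
    calc x * |Real.log x| ^ ((1:ℝ)/4) ≤ x * x ^ (-(1/2):ℝ) :=
          mul_le_mul_of_nonneg_left h1 hx0.le
      _ = x ^ ((1:ℝ)/2) := by
          rw [show x * x ^ (-(1/2):ℝ) = x ^ (1:ℝ) * x ^ (-(1/2):ℝ) by rw [Real.rpow_one],
            ← Real.rpow_add hx0]
          norm_num

open Real Set Topology in
lemma u14_continuous : Continuous u14 := by
  rw [continuous_iff_continuousAt]
  intro p
  by_cases hp : p.1 ^ 2 + p.2 ^ 2 = 0
  · have hp1 : p.1 = 0 := by nlinarith [sq_nonneg p.1, sq_nonneg p.2]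
    have hp2 : p.2 = 0 := by nlinarith [sq_nonneg p.1, sq_nonneg p.2]
    have hval : u14 p = 0 := by simp [u14, hp2]
    rw [ContinuousAt, hval]
    have hr : Tendsto (fun q : ℝ × ℝ => Real.sqrt (q.1 ^ 2 + q.2 ^ 2)) (𝓝 p) (𝓝[≥] 0) := by
      have hc : Tendsto (fun q : ℝ × ℝ => Real.sqrt (q.1 ^ 2 + q.2 ^ 2)) (𝓝 p) (𝓝 0) := by
        have : ContinuousAt (fun q : ℝ × ℝ => Real.sqrt (q.1 ^ 2 + q.2 ^ 2)) p := by fun_prop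
        simpa [ContinuousAt, hp, Real.sqrt_eq_zero'] using this
      exact tendsto_nhdsWithin_of_tendsto_nhds_of_eventually_within _ hc
        (Eventually.of_forall fun q => Real.sqrt_nonneg _)
    have hphi : Tendsto (fun x : ℝ => x * |Real.log x| ^ ((1:ℝ)/4)) (𝓝[≥] 0) (𝓝 0) := by
      have h01 : (Ici (0:ℝ)) = {0} ∪ Ioi 0 := by
        ext x; simp [le_iff_lt_or_eq, or_comm, eq_comm]
      rw [h01, nhdsWithin_union, nhdsWithin_singleton, tendsto_sup]
      constructor
      · have : (fun x : ℝ => x * |Real.log x| ^ ((1:ℝ)/4)) 0 = 0 := by simp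
        simpa [this] using tendsto_pure_nhds (fun x : ℝ => x * |Real.log x| ^ ((1:ℝ)/4)) 0
      · exact phi14_tendsto
    refine squeeze_zero_norm (fun q => ?_) (hphi.comp hr)
    have habs : |q.2| ≤ Real.sqrt (q.1 ^ 2 + q.2 ^ 2) := by
      rw [← Real.sqrt_sq_eq_abs]
      exact Real.sqrt_le_sqrt (by nlinarith [sq_nonneg q.1])
    calc ‖u14 q‖ = |q.2| * |Real.log (Real.sqrt (q.1 ^ 2 + q.2 ^ 2))| ^ ((1:ℝ)/4) := by
          rw [Real.norm_eq_abs, u14, abs_mul,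
            abs_of_nonneg (Real.rpow_nonneg (abs_nonneg _) _)]
      _ ≤ Real.sqrt (q.1 ^ 2 + q.2 ^ 2) *
            |Real.log (Real.sqrt (q.1 ^ 2 + q.2 ^ 2))| ^ ((1:ℝ)/4) :=
          mul_le_mul_of_nonneg_right habs (Real.rpow_nonneg (abs_nonneg _) _)
  · have hs : Real.sqrt (p.1 ^ 2 + p.2 ^ 2) ≠ 0 := by
      rw [Real.sqrt_ne_zero']
      rcases lt_or_eq_of_le (by positivity : (0:ℝ) ≤ p.1 ^ 2 + p.2 ^ 2) with h | h
      · exact h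
      · exact absurd h.symm hp
    have hc : ContinuousAt (fun q : ℝ × ℝ => Real.sqrt (q.1 ^ 2 + q.2 ^ 2)) p := by fun_prop
    exact continuousAt_snd.mul (((hc.log hs).abs).rpow_const (Or.inr (by norm_num)))

open Real Set Topology in
lemma u14_smooth : ContDiffOn ℝ (⊤ : ℕ∞) u14 S14 := by
  have hSopen : IsOpen S14 := by
    have : S14 = {p : ℝ × ℝ | p.1 ^ 2 + p.2 ^ 2 < 1/4} ∩ {p : ℝ × ℝ | 0 < p.2} := rfl
    rw [this]
    exact (isOpen_lt (by fun_prop) continuous_const).inter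
      (isOpen_lt continuous_const continuous_snd)
  intro p hp
  apply ContDiffAt.contDiffWithinAt
  obtain ⟨hp1, hp2⟩ := hp
  have htpos : 0 < p.1 ^ 2 + p.2 ^ 2 := by nlinarith [sq_nonneg p.1]
  have ht : ContDiffAt ℝ (⊤ : ℕ∞) (fun q : ℝ × ℝ => q.1 ^ 2 + q.2 ^ 2) p :=
    ((contDiff_fst.pow 2).add (contDiff_snd.pow 2)).contDiffAt
  have hsq : ContDiffAt ℝ (⊤ : ℕ∞) (fun q : ℝ × ℝ => Real.sqrt (q.1 ^ 2 + q.2 ^ 2)) p :=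
    (Real.contDiffAt_sqrt htpos.ne').comp p ht
  have hspos : 0 < Real.sqrt (p.1 ^ 2 + p.2 ^ 2) := Real.sqrt_pos.2 htpos
  have hlogneg : Real.log (Real.sqrt (p.1 ^ 2 + p.2 ^ 2)) < 0 := by
    apply Real.log_neg hspos
    rw [show (1:ℝ) = Real.sqrt 1 by simp]
    exact Real.sqrt_lt_sqrt (by positivity) (by linarith)
  have hlog : ContDiffAt ℝ (⊤ : ℕ∞)
      (fun q : ℝ × ℝ => -Real.log (Real.sqrt (q.1 ^ 2 + q.2 ^ 2))) p :=
    ((Real.contDiffAt_log.2 hspos.ne').comp p hsq).neg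
  have hrpow : ContDiffAt ℝ (⊤ : ℕ∞)
      (fun q : ℝ × ℝ => (-Real.log (Real.sqrt (q.1 ^ 2 + q.2 ^ 2))) ^ ((1:ℝ)/4)) p :=
    by have h := (Real.contDiffAt_rpow_const_of_ne (p := (1:ℝ)/4) (n := (⊤ : ℕ∞)) (by linarith : 0 < -Real.log (Real.sqrt (p.1 ^ 2 + p.2 ^ 2))).ne').comp p hlog; exact h
  have hsmooth : ContDiffAt ℝ (⊤ : ℕ∞)
      (fun q : ℝ × ℝ => q.2 * (-Real.log (Real.sqrt (q.1 ^ 2 + q.2 ^ 2))) ^ ((1:ℝ)/4)) p :=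
    contDiff_snd.contDiffAt.mul hrpow
  apply hsmooth.congr_of_eventuallyEq
  filter_upwards [hSopen.mem_nhds ⟨hp1, hp2⟩] with q hq
  obtain ⟨hq1, hq2⟩ := hq
  have hqtpos : 0 < q.1 ^ 2 + q.2 ^ 2 := by nlinarith [sq_nonneg q.1]
  have hqspos : 0 < Real.sqrt (q.1 ^ 2 + q.2 ^ 2) := Real.sqrt_pos.2 hqtpos
  have hqlogneg : Real.log (Real.sqrt (q.1 ^ 2 + q.2 ^ 2)) < 0 := by
    apply Real.log_neg hqspos
    rw [show (1:ℝ) = Real.sqrt 1 by simp]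
    exact Real.sqrt_lt_sqrt (by positivity) (by linarith)
  rw [u14, abs_of_neg hqlogneg]

open Real Set Topology in
lemma u14_ratio_tendsto :
    Tendsto (fun y : ℝ => u14 (0, y) / y) (nhdsWithin 0 (Set.Ioi 0)) atTop := by
  have heq : ∀ᶠ y in 𝓝[>] (0:ℝ), |Real.log y| ^ ((1:ℝ)/4) = u14 (0, y) / y := by
    filter_upwards [self_mem_nhdsWithin] with y hy
    have hy0 : (0:ℝ) < y := hy
    have hu : u14 (0, y) = y * |Real.log y| ^ ((1:ℝ)/4) := by
      rw [u14]
      norm_num [Real.sqrt_sq hy0.le]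
    rw [hu, mul_comm, mul_div_assoc, div_self hy0.ne', mul_one]
  have hT : Tendsto (fun y : ℝ => |Real.log y| ^ ((1:ℝ)/4)) (𝓝[>] (0:ℝ)) atTop :=
    (tendsto_rpow_atTop (by norm_num : (0:ℝ) < 1/4)).comp
      (tendsto_abs_atBot_atTop.comp Real.tendsto_log_nhdsGT_zero)
  exact hT.congr' heq

theorem stmt14 :
    ContinuousOn u14 (closure S14) ∧
    ContDiffOn ℝ (⊤ : ℕ∞) u14 S14 ∧
    (∀ x : ℝ, u14 (x, 0) = 0) ∧
    Tendsto (fun y : ℝ => u14 (0, y) / y) (nhdsWithin 0 (Set.Ioi 0)) atTop ∧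
    ¬ ∃ C ε : ℝ, 0 < ε ∧ ∀ y : ℝ, 0 < y → y < ε → |u14 (0, y)| ≤ C * y := by
  refine ⟨u14_continuous.continuousOn, u14_smooth, fun x => by simp [u14],
    u14_ratio_tendsto, ?_⟩
  rintro ⟨C, ε, hε, hC⟩
  have h1 : ∀ᶠ y in nhdsWithin (0:ℝ) (Set.Ioi 0), C + 1 ≤ u14 (0, y) / y :=
    u14_ratio_tendsto.eventually_ge_atTop (C + 1)
  have h2 : ∀ᶠ y in nhdsWithin (0:ℝ) (Set.Ioi 0), y < ε :=
    (gt_mem_nhds hε).filter_mono nhdsWithin_le_nhds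
  obtain ⟨y, hy1, hy2, hy3⟩ := (h1.and (h2.and self_mem_nhdsWithin)).exists
  have hy0 : (0:ℝ) < y := hy3
  have hb := hC y hy0 hy2
  have hnn : 0 ≤ u14 (0, y) :=
    mul_nonneg hy0.le (Real.rpow_nonneg (abs_nonneg _) _)
  rw [abs_of_nonneg hnn] at hb
  have : u14 (0, y) / y ≤ C := (div_le_iff₀ hy0).2 hb
  linarith
end
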